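/- Let G be a non-abelian finite p-group and M a central subgroup of G. Then Aut^M_{Z(G)}(G) = Inn(G) if and only if G has nilpotency class 2, γ₂(G) ≤ M, and M is cyclic. -/

import Mathlib

/-!
Sending `α` to `x ↦ x⁻¹ α(x)` identifies `Aut^M_{Z(G)}(G)` with `Hom(G/Z(G), M)`, and
`Inn(G) ≅ G/Z(G)` lies inside it exactly when `γ₂(G) ≤ M`. Then `G/Z(G)` is abelian of exponent
dividing `exp M`, so the two finite sets agree iff `|Hom(G/Z(G), M)| = |G/Z(G)|`. By duality this
holds when `M` is cyclic. Otherwise `M` contains a cyclic subgroup `C` with `exp M ∣ |C|`, which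
already receives `|G/Z(G)|` homomorphisms, and a nontrivial subgroup meeting `C` trivially, which
receives a nontrivial one, so there are too many.
-/

open Subgroup
open scoped commutatorElement

open scoped IsMulCommutative in
theorem IsCyclic.card_monoidHom_of_exponent_dvd {A C : Type*} [Group A] [IsMulCommutative A]
    [Finite A] [Group C] [Finite C] [IsCyclic C] (h : Monoid.exponent A ∣ Nat.card C) :
    Nat.card (A →* C) = Nat.card A := by
  let := IsCyclic.commGroup (α := C)
  have : NeZero (Nat.card C) := ⟨Nat.card_pos.ne'⟩
  have : IsCyclic Cˣ := isCyclic_of_surjective _ (toUnits (G := C)).surjective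
  have : HasEnoughRootsOfUnity C (Nat.card C) :=
    { prim := by
        obtain ⟨g, hg⟩ := IsCyclic.exists_ofOrder_eq_natCard (α := C)
        exact ⟨g, hg ▸ IsPrimitiveRoot.orderOf g⟩
      cyc := inferInstance }
  have := HasEnoughRootsOfUnity.of_dvd C h
  rw [← CommGroup.card_monoidHom_of_hasEnoughRootsOfUnity A C]
  exact Nat.card_congr (MulEquiv.monoidHomCongrRightEquiv toUnits)

theorem IsPGroup.nontrivial_monoidHom {p : ℕ} [Fact p.Prime] {A D : Type*} [Group A]
    [IsMulCommutative A] [Finite A] [Nontrivial A] [Group D] [Finite D]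
    (hA : IsPGroup p A) (hD : p ∣ Nat.card D) : Nontrivial (A →* D) := by
  -- `A` maps onto a group of order `p`, which embeds into `D` by Cauchy's theorem.
  obtain ⟨k, hk⟩ := hA.exists_card_eq
  have hk0 : k ≠ 0 := by
    rintro rfl
    exact (Finite.one_lt_card_iff_nontrivial.mpr ‹_›).ne' (by simpa using hk)
  obtain ⟨H, hH⟩ := Sylow.exists_subgroup_card_pow_prime p (hk ▸ pow_dvd_pow p (k.sub_le 1))
  have hindex : H.index = p := by
    have h := H.card_mul_index
    rw [hk, hH, ← pow_sub_mul_pow p (Nat.one_le_iff_ne_zero.mpr hk0), pow_one] at h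
    exact Nat.eq_of_mul_eq_mul_left (pow_pos (Fact.out : p.Prime).pos _) h
  obtain ⟨d, hd⟩ := exists_prime_orderOf_dvd_card' p hD
  let e : A ⧸ H ≃* zpowers d := mulEquivOfPrimeCardEq hindex (Nat.card_zpowers (a := d) ▸ hd)
  obtain ⟨a, ha⟩ := QuotientGroup.mk_surjective (e.symm ⟨d, mem_zpowers d⟩)
  refine ⟨(zpowers d).subtype.comp (e.toMonoidHom.comp (QuotientGroup.mk' H)), 1, fun h => ?_⟩
  have : d = 1 := by simpa [ha] using DFunLike.congr_fun h a
  exact (Fact.out : p.Prime).one_lt.ne' (hd ▸ this ▸ orderOf_one)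

open scoped IsMulCommutative in
theorem IsPGroup.exists_disjoint_of_not_isCyclic {p : ℕ} [Fact p.Prime] {N : Type*} [Group N]
    [IsMulCommutative N] [Finite N] (hN : IsPGroup p N) (hcyc : ¬ IsCyclic N) :
    ∃ C D : Subgroup N, IsCyclic C ∧ Monoid.exponent N ∣ Nat.card C ∧ D ≠ ⊥ ∧ Disjoint C D := by
  classical
  obtain ⟨ι, _, n, hn, ⟨e⟩⟩ := CommGroup.equiv_prod_multiplicative_zmod_of_finite N
  let Z i := Multiplicative (ZMod (n i))
  have : ∀ i, NeZero (n i) := fun i => NeZero.of_gt (hn i)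
  let factor : (i : ι) → Z i →* N := fun i => e.symm.toMonoidHom.comp (MonoidHom.mulSingle Z i)
  have hfactor : ∀ i, Function.Injective (factor i) := fun i =>
    e.symm.injective.comp (Pi.mulSingle_injective i)
  have hpow : ∀ i, ∃ k, n i = p ^ k := fun i => by
    obtain ⟨k, hk⟩ := IsPGroup.iff_card.mp
      ((hN.of_equiv e).of_surjective (Pi.evalMonoidHom Z i) (Function.surjective_eval i))
    exact ⟨k, by simpa [Z] using hk⟩
  choose k hk using hpow
  have : Nonempty ι := by
    by_contra hι
    rw [not_nonempty_iff] at hι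
    exact hcyc (isCyclic_of_surjective e.symm.toMonoidHom e.symm.surjective)
  -- `C` is a cyclic factor of largest order and `D` any other factor.
  obtain ⟨i₀, -, hi₀⟩ := Finset.univ.exists_max_image k Finset.univ_nonempty
  obtain ⟨i₁, hi₁⟩ : ∃ i₁, i₁ ≠ i₀ := by
    by_contra! h
    have : Unique ι := ⟨⟨i₀⟩, h⟩
    let e' : N ≃* Z default := e.trans (MulEquiv.piUnique Z)
    exact hcyc (isCyclic_of_surjective e'.symm.toMonoidHom e'.symm.surjective)
  refine ⟨(factor i₀).range, (factor i₁).range,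
    isCyclic_of_surjective _ (factor i₀).rangeRestrict_surjective, ?_, ?_, ?_⟩
  · rw [← Nat.card_congr (MonoidHom.ofInjective (hfactor i₀)).toEquiv,
      Monoid.exponent_eq_of_mulEquiv e, Monoid.exponent_pi]
    refine Finset.lcm_dvd fun i _ => ?_
    simp only [Z, Monoid.exponent_multiplicative, ZMod.exponent, Nat.card_eq_fintype_card,
      Fintype.card_multiplicative, ZMod.card, hk]
    exact pow_dvd_pow p (hi₀ i (Finset.mem_univ i))
  · have : Nontrivial (ZMod (n i₁)) := ZMod.nontrivial_iff.mpr (hn i₁).ne'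
    rw [Ne, MonoidHom.range_eq_bot_iff]
    intro h
    obtain ⟨a, b, hab⟩ := exists_pair_ne (Z i₁)
    exact hab (hfactor i₁ (by simp [h]))
  · rw [Subgroup.disjoint_def]
    rintro _ ⟨a, rfl⟩ ⟨b, hb⟩
    have := congr_fun (e.symm.injective hb) i₀
    simp only [MonoidHom.mulSingle_apply, Pi.mulSingle_eq_of_ne hi₁.symm,
      Pi.mulSingle_eq_same] at this
    simp [← this]

theorem IsPGroup.isCyclic_of_card_monoidHom_le {p : ℕ} [Fact p.Prime] {A N : Type*} [Group A]
    [IsMulCommutative A] [Finite A] [Nontrivial A] [Group N] [IsMulCommutative N] [Finite N]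
    (hN : IsPGroup p N) (hA : IsPGroup p A) (hexp : Monoid.exponent A ∣ Monoid.exponent N)
    (hcard : Nat.card (A →* N) ≤ Nat.card A) : IsCyclic N := by
  by_contra hcyc
  obtain ⟨C, D, hC, hCexp, hD, hCD⟩ := hN.exists_disjoint_of_not_isCyclic hcyc
  have : Nontrivial D := (nontrivial_iff_ne_bot D).mpr hD
  obtain ⟨m, hm, hDcard⟩ := (hN.to_subgroup D).nontrivial_iff_card.mp ‹_›
  have : Nontrivial (A →* D) := hA.nontrivial_monoidHom (hDcard ▸ dvd_pow_self p hm.ne')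
  obtain ⟨ψ, hψ⟩ := exists_ne (1 : A →* D)
  have : Finite (A →* N) := .of_injective _ DFunLike.coe_injective
  have hinj : Function.Injective fun φ : A →* C => C.subtype.comp φ := fun φ φ' h =>
    MonoidHom.ext fun a => Subtype.ext (DFunLike.congr_fun h a)
  have hbij := hinj.bijective_of_nat_card_le
    (hcard.trans (IsCyclic.card_monoidHom_of_exponent_dvd (hexp.trans hCexp)).ge)
  obtain ⟨φ, hφ⟩ := hbij.2 (D.subtype.comp ψ)
  refine hψ (MonoidHom.ext fun a => Subtype.ext ?_)
  have h : (φ a : N) = ψ a := DFunLike.congr_fun hφ a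
  exact Subgroup.disjoint_def.mp hCD (h ▸ (φ a).2) (ψ a).2

theorem MulAut.ker_conj {G : Type*} [Group G] :
    (MulAut.conj : G →* MulAut G).ker = center G := by
  ext g
  simp only [MonoidHom.mem_ker, MulEquiv.ext_iff, MulAut.conj_apply, MulAut.one_apply,
    mul_inv_eq_iff_eq_mul, mem_center_iff]
  exact forall_congr' fun _ => eq_comm

theorem MulAut.card_range_conj {G : Type*} [Group G] :
    Nat.card (Set.range (MulAut.conj : G → MulAut G)) = Nat.card (G ⧸ center G) :=
  Nat.card_congr ((QuotientGroup.quotientMulEquivOfEq MulAut.ker_conj.symm).trans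
    (QuotientGroup.quotientKerEquivRange MulAut.conj)).toEquiv.symm

section CentralAutomorphisms

variable {G : Type*} [Group G] {M : Subgroup G}

/-- `Aut^M_{Z(G)}(G)`. -/
def centralAutFixingCenter (M : Subgroup G) : Set (MulAut G) :=
  {α | (∀ x, x⁻¹ * α x ∈ M) ∧ ∀ z ∈ center G, α z = z}

theorem range_conj_subset_centralAutFixingCenter_iff (M : Subgroup G) :
    Set.range (MulAut.conj : G → MulAut G) ⊆ centralAutFixingCenter M ↔ commutator G ≤ M := by
  have key : ∀ g x : G, x⁻¹ * MulAut.conj g x = ⁅x⁻¹, g⁆ := fun g x => by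
    simp [commutatorElement_def, mul_assoc]
  constructor
  · intro h
    rw [_root_.commutator_def, commutator_le]
    intro g₁ _ g₂ _
    have := (h ⟨g₂, rfl⟩).1 g₁⁻¹
    rwa [key, inv_inv] at this
  · rintro hc _ ⟨g, rfl⟩
    refine ⟨fun x => key g x ▸ hc (commutator_mem_commutator (mem_top _) (mem_top _)), ?_⟩
    intro z hz
    rw [MulAut.conj_apply, mem_center_iff.mp hz g, mul_inv_cancel_right]

def quotientCenterHomOfMem (hM : M ≤ center G) {α : MulAut G}
    (hα : α ∈ centralAutFixingCenter M) : G ⧸ center G →* M :=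
  QuotientGroup.lift (center G)
    (MonoidHom.mk' (fun x => ⟨x⁻¹ * α x, hα.1 x⟩) fun x y => Subtype.ext <| by
      have hx := mem_center_iff.mp (hM (hα.1 x))
      calc (x * y)⁻¹ * α (x * y) = y⁻¹ * (x⁻¹ * α x) * α y := by rw [map_mul]; group
        _ = x⁻¹ * α x * (y⁻¹ * α y) := by rw [hx]; group)
    fun z hz => Subtype.ext (by simp [hα.2 z hz])

theorem quotientCenterHomOfMem_mk (hM : M ≤ center G) {α : MulAut G}
    (hα : α ∈ centralAutFixingCenter M) (x : G) :
    (quotientCenterHomOfMem hM hα x : G) = x⁻¹ * α x :=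
  rfl

def mulAutOfQuotientCenterHom (hM : M ≤ center G) (f : G ⧸ center G →* M) : MulAut G where
  toFun x := x * f x
  invFun x := x * (f x)⁻¹
  left_inv x := by simp [QuotientGroup.mk_mul_of_mem x (hM (f x).2)]
  right_inv x := by simp [QuotientGroup.mk_mul_of_mem x (inv_mem (hM (f x).2))]
  map_mul' x y := by
    simp only [QuotientGroup.mk_mul, map_mul, Subgroup.coe_mul]
    rw [mul_assoc x, ← mul_assoc y, mem_center_iff.mp (hM (f x).2) y]
    group

theorem mulAutOfQuotientCenterHom_apply (hM : M ≤ center G) (f : G ⧸ center G →* M) (x : G) :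
    mulAutOfQuotientCenterHom hM f x = x * f x :=
  rfl

theorem mulAutOfQuotientCenterHom_mem (hM : M ≤ center G) (f : G ⧸ center G →* M) :
    mulAutOfQuotientCenterHom hM f ∈ centralAutFixingCenter M := by
  refine ⟨fun x => by simp [mulAutOfQuotientCenterHom_apply], fun z hz => ?_⟩
  simp [mulAutOfQuotientCenterHom_apply, (QuotientGroup.eq_one_iff z).mpr hz]

def centralAutFixingCenterEquiv (hM : M ≤ center G) :
    centralAutFixingCenter M ≃ (G ⧸ center G →* M) where
  toFun α := quotientCenterHomOfMem hM α.2
  invFun f := ⟨mulAutOfQuotientCenterHom hM f, mulAutOfQuotientCenterHom_mem hM f⟩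
  left_inv α := Subtype.ext <| MulEquiv.ext fun x => by
    simp [mulAutOfQuotientCenterHom_apply, quotientCenterHomOfMem_mk]
  right_inv f := MonoidHom.ext fun q => QuotientGroup.induction_on q fun x => Subtype.ext <| by
    simp [mulAutOfQuotientCenterHom_apply, quotientCenterHomOfMem_mk]

theorem exponent_quotient_center_dvd_exponent (hM : M ≤ center G) (hc : commutator G ≤ M) :
    Monoid.exponent (G ⧸ center G) ∣ Monoid.exponent M := by
  refine Monoid.exponent_dvd_of_forall_pow_eq_one fun q =>
    QuotientGroup.induction_on q fun x => ?_
  rw [← QuotientGroup.mk_pow, QuotientGroup.eq_one_iff, mem_center_iff]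
  intro g
  have hcM : ⁅g, x⁆ ∈ M := hc (commutator_mem_commutator (mem_top g) (mem_top x))
  have hcx : Commute ⁅g, x⁆ x := (mem_center_iff.mp (hM hcM) x).symm
  have hpow : ⁅g, x⁆ ^ Monoid.exponent M = 1 := by
    simpa using congrArg Subtype.val (Monoid.pow_exponent_eq_one (⟨_, hcM⟩ : M))
  calc g * x ^ Monoid.exponent M = (g * x * g⁻¹) ^ Monoid.exponent M * g := by
        rw [conj_pow]; group
    _ = (⁅g, x⁆ * x) ^ Monoid.exponent M * g := by rw [commutatorElement_def]; group
    _ = x ^ Monoid.exponent M * g := by rw [hcx.mul_pow, hpow, one_mul]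

end CentralAutomorphisms

/-- For a non-abelian finite p-group G and M ≤ Z(G): Aut^M_{Z(G)}(G) = Inn(G) iff
G has nilpotency class 2, γ₂(G) ≤ M, and M is cyclic. -/
theorem stmt8 {p : ℕ} [Fact p.Prime] {G : Type*} [Group G] [Finite G]
    (hp : IsPGroup p G) (hna : ¬ ∀ a b : G, a * b = b * a)
    (M : Subgroup G) (hM : M ≤ Subgroup.center G) :
    {α : MulAut G | (∀ x : G, x⁻¹ * α x ∈ M) ∧ ∀ z ∈ Subgroup.center G, α z = z}
        = Set.range (fun g : G => MulAut.conj g) ↔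
      (commutator G ≤ Subgroup.center G ∧ commutator G ≤ M ∧ IsCyclic ↥M) := by
  change centralAutFixingCenter M = Set.range MulAut.conj ↔ _
  have : IsMulCommutative M := ⟨⟨fun a b => Subtype.ext (mem_center_iff.mp (hM b.2) a)⟩⟩
  have hcard : Nat.card (centralAutFixingCenter M) = Nat.card (G ⧸ center G →* M) :=
    Nat.card_congr (centralAutFixingCenterEquiv hM)
  constructor
  · intro h
    have hcM := (range_conj_subset_centralAutFixingCenter_iff M).mp h.ge
    have : IsMulCommutative (G ⧸ center G) :=
      Normal.quotient_commutative_iff_commutator_le.mpr (hcM.trans hM)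
    have : Nontrivial (G ⧸ center G) := QuotientGroup.nontrivial_iff.mpr fun htop =>
      hna (isMulCommutative_iff.mp (center_eq_top_iff.mp htop))
    refine ⟨hcM.trans hM, hcM, (hp.to_subgroup M).isCyclic_of_card_monoidHom_le
      (hp.to_quotient _) (exponent_quotient_center_dvd_exponent hM hcM) ?_⟩
    rw [← hcard, h, MulAut.card_range_conj]
  · rintro ⟨hcZ, hcM, hcyc⟩
    have : IsMulCommutative (G ⧸ center G) :=
      Normal.quotient_commutative_iff_commutator_le.mpr hcZ
    have hsub := (range_conj_subset_centralAutFixingCenter_iff M).mpr hcM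
    refine (Set.eq_of_subset_of_ncard_le hsub ?_ (Set.toFinite _)).symm
    rw [← Nat.card_coe_set_eq, ← Nat.card_coe_set_eq, hcard, MulAut.card_range_conj,
      IsCyclic.card_monoidHom_of_exponent_dvd
        ((exponent_quotient_center_dvd_exponent hM hcM).trans Group.exponent_dvd_nat_card)]
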